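/- arXiv:1211.4999 — 3 statements merged into one kernel-verified Lean document; each statement's English description precedes it below -/
import Mathlib

section
/- For every nonempty set M ⊆ C and every k ∈ {1,…,m}, the M-signature coordinate satisfies p_M^{(k)} = ∑_{A⊆C, |M∖A|=k} ∑_{j∈M∖A} q_j(A)·Δ_jφ(A), and equivalently p_M^{(k)} = ∑_{j∈M} ∑_{A⊆C∖{j}, |M∖A|=k} q_j(A)·Δ_jφ(A). -/
open MeasureTheory Finset

/-- Lifetime of the (sub)system on component set `D` with structure function `χ`
(the maximum over the sets `A ⊆ D` with `χ A = 1` of `min_{i ∈ A} T i`). -/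
noncomputable def sysLifeOn {Ω : Type*} {n : ℕ} (T : Fin n → Ω → ℝ)
    (D : Finset (Fin n)) (χ : Finset (Fin n) → ℝ) (ω : Ω) : ℝ :=
  if h : (D.powerset.filter fun A => χ A = 1).Nonempty then
    (D.powerset.filter fun A => χ A = 1).sup' h
      (fun A => if hA : A.Nonempty then A.inf' hA fun i => T i ω else 0)
  else 0

/-- The `k`-th order statistic of the lifetimes `(T i)_{i ∈ M}`. -/
noncomputable def orderStat {Ω : Type*} {n : ℕ} (T : Fin n → Ω → ℝ)
    (M : Finset (Fin n)) (k : ℕ) (ω : Ω) : ℝ :=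
  ((M.val.map fun i => T i ω).sort (· ≤ ·)).getD (k - 1) 0

/-- The relative quality function `q_j(A) = Pr(max_{i ∈ C∖A} T_i = T_j < min_{i ∈ A} T_i)`. -/
noncomputable def relQual {Ω : Type*} [MeasurableSpace Ω] {n : ℕ} (μ : Measure Ω)
    (T : Fin n → Ω → ℝ) (j : Fin n) (A : Finset (Fin n)) : ℝ :=
  (μ {ω | (∀ i ∉ A, T i ω ≤ T j ω) ∧ ∀ i ∈ A, T j ω < T i ω}).toReal

/-! Off the null event of ties, `ω` lies in the event defining `relQual μ T j A` exactly when `A`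
is the set of components outliving `j`. So for each `j ∈ M` the inner sum collapses to the
increment of `φ` at that set, counted when `j` is the `k`-th failure in `M`; the increment is `1`
exactly when the failure of `j` is the one that brings the system down, i.e. when `T_C = T_j`.
Hence the double sum is almost surely the indicator of `T_C = T_{k:M}`, and integrating it gives
the second formula; exchanging the order of summation gives the first. -/

theorem List.Pairwise.length_filter_le_getElem {α : Type*} [LinearOrder α] {l : List α}
    (hl : l.Pairwise (· < ·)) (i : ℕ) (hi : i < l.length) :
    (l.filter (· ≤ l[i])).length = i + 1 := by
  induction l generalizing i with
  | nil => simp at hi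
  | cons a t ih =>
    rw [List.pairwise_cons] at hl
    cases i with
    | zero =>
      have : t.filter (· ≤ a) = [] :=
        List.filter_eq_nil_iff.2 fun b hb => by simpa using hl.1 b hb
      simp [this]
    | succ i =>
      have hi : i < t.length := by simpa using hi
      have ha : a ≤ t[i] := (hl.1 _ (List.getElem_mem hi)).le
      simp [ha, ih hl.2 i hi]

theorem List.Pairwise.getElem_eq_iff {α : Type*} [LinearOrder α] {l : List α}
    (hl : l.Pairwise (· < ·)) {i : ℕ} (hi : i < l.length) {x : α} :
    l[i] = x ↔ x ∈ l ∧ (l.filter (· ≤ x)).length = i + 1 := by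
  constructor
  · rintro rfl
    exact ⟨List.getElem_mem hi, hl.length_filter_le_getElem i hi⟩
  · rintro ⟨hx, hcount⟩
    obtain ⟨j, hj, rfl⟩ := List.mem_iff_getElem.1 hx
    rw [hl.length_filter_le_getElem j hj] at hcount
    simp [Nat.add_right_cancel hcount]

section OrderStatistics

variable {Ω : Type*} {n : ℕ} (T : Fin n → Ω → ℝ) (M : Finset (Fin n)) {k : ℕ} (ω : Ω)

lemma exists_mem_orderStat_eq (hk1 : 1 ≤ k) (hkm : k ≤ #M) :
    ∃ j ∈ M, orderStat T M k ω = T j ω := by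
  have hlen : k - 1 < ((M.val.map fun i => T i ω).sort (· ≤ ·)).length := by
    rw [Multiset.length_sort, Multiset.card_map]; exact lt_of_lt_of_le (by omega) hkm
  have hmem := List.getElem_mem hlen
  rw [Multiset.mem_sort, Multiset.mem_map] at hmem
  obtain ⟨j, hj, hjk⟩ := hmem
  exact ⟨j, hj, by rw [orderStat, List.getD_eq_getElem _ _ hlen, hjk]⟩

lemma orderStat_eq_iff (hinj : Function.Injective fun i => T i ω) (hk1 : 1 ≤ k) (hkm : k ≤ #M)
    (j : Fin n) :
    orderStat T M k ω = T j ω ↔ j ∈ M ∧ #{i ∈ M | T i ω ≤ T j ω} = k := by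
  have hval : (M.image fun i => T i ω).val = M.val.map fun i => T i ω :=
    image_val_of_injOn hinj.injOn
  set l := (M.image fun i => T i ω).sort with hl
  have hsort : (M.val.map fun i => T i ω).sort (· ≤ ·) = l := by rw [← hval]; rfl
  have hlen : k - 1 < l.length := by rw [length_sort, card_image_of_injective _ hinj]; omega
  have hcount : (l.filter (· ≤ T j ω)).length = #{i ∈ M | T i ω ≤ T j ω} := by
    rw [← List.countP_eq_length_filter, ← Multiset.coe_countP, hl, sort_eq, hval,
      Multiset.countP_map, card_def, filter_val]
  rw [orderStat, hsort, List.getD_eq_getElem _ _ hlen, (sortedLT_sort _).pairwise.getElem_eq_iff,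
    mem_sort, mem_image, hcount, Nat.sub_add_cancel hk1]
  simp only [hinj.eq_iff, exists_eq_right]

end OrderStatistics

structure IsSemicoherent {n : ℕ} (φ : Finset (Fin n) → ℝ) : Prop where
  zero_or_one : ∀ A, φ A = 0 ∨ φ A = 1
  mono : ∀ A B : Finset (Fin n), A ⊆ B → φ A ≤ φ B
  map_empty : φ ∅ = 0
  map_univ : φ univ = 1

namespace IsSemicoherent

variable {Ω : Type*} {n : ℕ} {T : Fin n → Ω → ℝ} {φ : Finset (Fin n) → ℝ} {ω : Ω}

lemma nonempty_of_eq_one (hφ : IsSemicoherent φ) {A : Finset (Fin n)} (hA : φ A = 1) :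
    A.Nonempty :=
  nonempty_iff_ne_empty.2 fun h => by simp [h, hφ.map_empty] at hA

lemma exists_eq_one_forall_mem_iff (hφ : IsSemicoherent φ) (P : Fin n → Prop)
    [DecidablePred P] :
    (∃ A, φ A = 1 ∧ ∀ i ∈ A, P i) ↔ φ (univ.filter P) = 1 := by
  refine ⟨fun ⟨A, hA, hP⟩ => ?_, fun h => ⟨_, h, fun i hi => (mem_filter.1 hi).2⟩⟩
  have := hφ.mono A _ fun i hi => mem_filter.2 ⟨mem_univ i, hP i hi⟩
  rcases hφ.zero_or_one (univ.filter P) with h | h <;> linarith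

lemma filter_powerset_eq_one_nonempty (hφ : IsSemicoherent φ) :
    (univ.powerset.filter fun A => φ A = 1).Nonempty :=
  ⟨univ, mem_filter.2 ⟨mem_powerset_self _, hφ.map_univ⟩⟩

lemma lt_sysLifeOn_univ_iff (hφ : IsSemicoherent φ) (t : ℝ) :
    t < sysLifeOn T univ φ ω ↔ φ (univ.filter fun i => t < T i ω) = 1 := by
  rw [← hφ.exists_eq_one_forall_mem_iff, sysLifeOn, dif_pos hφ.filter_powerset_eq_one_nonempty,
    lt_sup'_iff]
  simp only [mem_filter, mem_powerset, subset_univ, true_and]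
  exact exists_congr fun A => and_congr_right fun hA => by
    rw [dif_pos (hφ.nonempty_of_eq_one hA), lt_inf'_iff]

lemma le_sysLifeOn_univ_iff (hφ : IsSemicoherent φ) (t : ℝ) :
    t ≤ sysLifeOn T univ φ ω ↔ φ (univ.filter fun i => t ≤ T i ω) = 1 := by
  rw [← hφ.exists_eq_one_forall_mem_iff, sysLifeOn, dif_pos hφ.filter_powerset_eq_one_nonempty,
    le_sup'_iff]
  simp only [mem_filter, mem_powerset, subset_univ, true_and]
  exact exists_congr fun A => and_congr_right fun hA => by
    rw [dif_pos (hφ.nonempty_of_eq_one hA), le_inf'_iff]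

lemma sysLifeOn_univ_eq_iff (hφ : IsSemicoherent φ) (t : ℝ) :
    sysLifeOn T univ φ ω = t ↔
      φ (univ.filter fun i => t ≤ T i ω) = 1 ∧ φ (univ.filter fun i => t < T i ω) = 0 := by
  have h0 : φ (univ.filter fun i => t < T i ω) = 0 ↔ ¬t < sysLifeOn T univ φ ω := by
    rw [hφ.lt_sysLifeOn_univ_iff]
    rcases hφ.zero_or_one (univ.filter fun i => t < T i ω) with h | h <;> simp [h]
  rw [h0, ← hφ.le_sysLifeOn_univ_iff, not_lt, le_antisymm_iff, and_comm]

lemma insert_sub_eq_ite (hφ : IsSemicoherent φ) (j : Fin n) (A : Finset (Fin n)) :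
    φ (insert j A) - φ A = if φ (insert j A) = 1 ∧ φ A = 0 then 1 else 0 := by
  have hle := hφ.mono A _ (subset_insert j A)
  rcases hφ.zero_or_one A with h | h <;> rcases hφ.zero_or_one (insert j A) with h' | h' <;>
    simp_all
  linarith

end IsSemicoherent

noncomputable def outlivers {Ω : Type*} {n : ℕ} (T : Fin n → Ω → ℝ) (ω : Ω)
    (j : Fin n) : Finset (Fin n) :=
  univ.filter fun i => T j ω < T i ω

section Outlivers

variable {Ω : Type*} {n : ℕ} {T : Fin n → Ω → ℝ} {ω : Ω}

lemma notMem_outlivers_self (j : Fin n) : j ∉ outlivers T ω j := by simp [outlivers]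

lemma insert_outlivers (hinj : Function.Injective fun i => T i ω) (j : Fin n) :
    insert j (outlivers T ω j) = univ.filter fun i => T j ω ≤ T i ω := by
  ext i
  simp only [outlivers, mem_insert, mem_filter, mem_univ, true_and, le_iff_lt_or_eq,
    hinj.eq_iff]
  tauto

lemma sdiff_outlivers (M : Finset (Fin n)) (j : Fin n) :
    M \ outlivers T ω j = M.filter fun i => T i ω ≤ T j ω := by
  ext i
  simp [outlivers]

lemma IsSemicoherent.sysLifeOn_univ_eq_iff_of_injective {φ : Finset (Fin n) → ℝ}
    (hφ : IsSemicoherent φ) (hinj : Function.Injective fun i => T i ω) (j : Fin n) :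
    sysLifeOn T univ φ ω = T j ω ↔
      φ (insert j (outlivers T ω j)) = 1 ∧ φ (outlivers T ω j) = 0 := by
  rw [insert_outlivers hinj, hφ.sysLifeOn_univ_eq_iff]
  rfl

end Outlivers

def qualEvent {Ω : Type*} {n : ℕ} (T : Fin n → Ω → ℝ) (j : Fin n) (A : Finset (Fin n)) :
    Set Ω :=
  {ω | (∀ i ∉ A, T i ω ≤ T j ω) ∧ ∀ i ∈ A, T j ω < T i ω}

lemma relQual_eq_measureReal {Ω : Type*} [MeasurableSpace Ω] {n : ℕ} (μ : Measure Ω)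
    (T : Fin n → Ω → ℝ) (j : Fin n) (A : Finset (Fin n)) :
    relQual μ T j A = μ.real (qualEvent T j A) :=
  rfl

lemma mem_qualEvent_iff {Ω : Type*} {n : ℕ} {T : Fin n → Ω → ℝ} {ω : Ω} {j : Fin n}
    {A : Finset (Fin n)} : ω ∈ qualEvent T j A ↔ outlivers T ω j = A := by
  simp only [qualEvent, Set.mem_ofPred_eq, outlivers, Finset.ext_iff, mem_filter, mem_univ,
    true_and]
  exact ⟨fun h i => ⟨fun hi => by_contra fun hA => (h.1 i hA).not_gt hi, h.2 i⟩,
    fun h => ⟨fun i hi => not_lt.1 fun hlt => hi ((h i).1 hlt), fun i hi => (h i).2 hi⟩⟩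

lemma measurableSet_qualEvent {Ω : Type*} [MeasurableSpace Ω] {n : ℕ} {T : Fin n → Ω → ℝ}
    (hT : ∀ i, Measurable (T i)) (j : Fin n) (A : Finset (Fin n)) :
    MeasurableSet (qualEvent T j A) := by
  simp only [qualEvent, Set.ofPred_and, Set.ofPred_forall]
  exact (MeasurableSet.iInter fun i => .iInter fun _ => measurableSet_le (hT i) (hT j)).inter
    (MeasurableSet.iInter fun i => .iInter fun _ => measurableSet_lt (hT j) (hT i))

lemma indicator_sysLifeOn_eq_orderStat {Ω : Type*} {n : ℕ} {T : Fin n → Ω → ℝ} {ω : Ω}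
    (hinj : Function.Injective fun i => T i ω) {φ : Finset (Fin n) → ℝ}
    (hφ : IsSemicoherent φ)
    {M : Finset (Fin n)} {k : ℕ} (hk1 : 1 ≤ k) (hkm : k ≤ #M) :
    {ω | sysLifeOn T univ φ ω = orderStat T M k ω}.indicator 1 ω =
      ∑ j ∈ M, ∑ A ∈ (univ \ {j}).powerset.filter (fun A => #(M \ A) = k),
        (qualEvent T j A).indicator 1 ω * (φ (insert j A) - φ A) := by
  classical
  have hterm : ∀ j ∈ M, ∑ A ∈ (univ \ {j}).powerset.filter (fun A => #(M \ A) = k),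
      (qualEvent T j A).indicator 1 ω * (φ (insert j A) - φ A) =
        if orderStat T M k ω = T j ω ∧ sysLifeOn T univ φ ω = T j ω then 1 else 0 := by
    intro j hj
    simp only [Set.indicator_apply, mem_qualEvent_iff, Pi.one_apply, ite_mul, one_mul, zero_mul]
    rw [sum_ite_eq]
    simp [orderStat_eq_iff T M ω hinj hk1 hkm, hφ.sysLifeOn_univ_eq_iff_of_injective hinj,
      hφ.insert_sub_eq_ite, hj, sdiff_outlivers, subset_sdiff,
      disjoint_singleton_right, notMem_outlivers_self, ite_and]
  rw [sum_congr rfl hterm]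
  obtain ⟨j₀, hj₀, hord⟩ := exists_mem_orderStat_eq T M ω hk1 hkm
  rw [sum_eq_single_of_mem j₀ hj₀ fun j _ hne =>
    if_neg fun h => hne (hinj (h.1.symm.trans hord))]
  simp [Set.indicator_apply, hord]

lemma Finset.sum_filter_powerset_sum_sdiff {α β : Type*} [Fintype α] [DecidableEq α]
    [AddCommMonoid β] (M : Finset α) (p : Finset α → Prop) [DecidablePred p]
    (f : α → Finset α → β) :
    ∑ A ∈ univ.powerset.filter p, ∑ j ∈ M \ A, f j A =
      ∑ j ∈ M, ∑ A ∈ (univ \ {j}).powerset.filter p, f j A :=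
  sum_comm' fun A j => by
    simp only [mem_filter, mem_powerset, mem_sdiff, subset_univ, true_and, subset_sdiff,
      disjoint_singleton_right]
    tauto

section Integration

variable {Ω : Type*} [MeasurableSpace Ω] {μ : Measure Ω}

lemma ae_injective_of_measure_eq_zero {ι : Type*} [Countable ι] {X : ι → Ω → ℝ}
    (hties : ∀ i j, i ≠ j → μ {ω | X i ω = X j ω} = 0) :
    ∀ᵐ ω ∂μ, Function.Injective fun i => X i ω := by
  have h : ∀ i j, ∀ᵐ ω ∂μ, X i ω = X j ω → i = j := fun i j => by
    by_cases hij : i = j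
    · exact .of_forall fun _ _ => hij
    · exact (measure_eq_zero_iff_ae_notMem.1 (hties i j hij)).mono fun _ h h' => absurd h' h
  exact ae_all_iff.2 fun i => ae_all_iff.2 (h i)

lemma measureReal_eq_integral_of_indicator_ae_eq {s : Set Ω} {f : Ω → ℝ} (hf : Measurable f)
    (h : s.indicator 1 =ᵐ[μ] f) : μ.real s = ∫ ω, f ω ∂μ := by
  have hs : NullMeasurableSet s μ :=
    (aemeasurable_indicator_const_iff (1 : ℝ)).1 (hf.aemeasurable.congr h.symm)
  rw [← integral_congr_ae h, Pi.one_def, integral_indicator₀ hs, setIntegral_const, smul_eq_mul,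
    mul_one]

lemma integral_sum_sum_indicator_mul [IsFiniteMeasure μ] {ι κ : Type*} {E : ι → κ → Set Ω}
    (hE : ∀ i j, MeasurableSet (E i j)) (s : Finset ι) (t : ι → Finset κ)
    (c : ι → κ → ℝ) :
    ∫ ω, ∑ i ∈ s, ∑ j ∈ t i, (E i j).indicator 1 ω * c i j ∂μ =
      ∑ i ∈ s, ∑ j ∈ t i, μ.real (E i j) * c i j := by
  have hint : ∀ i j, Integrable (fun ω => (E i j).indicator 1 ω * c i j) μ := fun i j =>
    ((integrable_const 1).indicator (hE i j)).mul_const _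
  rw [integral_finsetSum _ fun i _ => integrable_finsetSum _ fun j _ => hint i j]
  refine sum_congr rfl fun i _ => ?_
  rw [integral_finsetSum _ fun j _ => hint i j]
  refine sum_congr rfl fun j _ => ?_
  rw [integral_mul_const, integral_indicator_one (hE i j)]

end Integration

theorem stmt_0_general {Ω : Type*} [MeasurableSpace Ω] (μ : Measure Ω) [IsProbabilityMeasure μ]
    {n : ℕ} (T : Fin n → Ω → ℝ) (hTmeas : ∀ i, Measurable (T i))
    (hties : ∀ i j : Fin n, i ≠ j → μ {ω | T i ω = T j ω} = 0)
    (φ : Finset (Fin n) → ℝ)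
    (hφ01 : ∀ A, φ A = 0 ∨ φ A = 1)
    (hφmono : ∀ A B : Finset (Fin n), A ⊆ B → φ A ≤ φ B)
    (hφempty : φ ∅ = 0) (hφfull : φ Finset.univ = 1)
    (M : Finset (Fin n)) (k : ℕ) (hk1 : 1 ≤ k) (hkm : k ≤ M.card) :
    (μ {ω | sysLifeOn T Finset.univ φ ω = orderStat T M k ω}).toReal =
      ∑ A ∈ (Finset.univ : Finset (Fin n)).powerset.filter (fun A => (M \ A).card = k),
        ∑ j ∈ M \ A, relQual μ T j A * (φ (insert j A) - φ A)
    ∧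
    (μ {ω | sysLifeOn T Finset.univ φ ω = orderStat T M k ω}).toReal =
      ∑ j ∈ M, ∑ A ∈ ((Finset.univ : Finset (Fin n)) \ {j}).powerset.filter
          (fun A => (M \ A).card = k),
        relQual μ T j A * (φ (insert j A) - φ A) := by
  have hφ : IsSemicoherent φ := ⟨hφ01, hφmono, hφempty, hφfull⟩
  have hsum : (μ {ω | sysLifeOn T univ φ ω = orderStat T M k ω}).toReal =
      ∑ j ∈ M, ∑ A ∈ (univ \ {j}).powerset.filter (fun A => #(M \ A) = k),
        relQual μ T j A * (φ (insert j A) - φ A) := by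
    have hmeas : ∀ j A, MeasurableSet (qualEvent T j A) := measurableSet_qualEvent hTmeas
    rw [← measureReal_def, measureReal_eq_integral_of_indicator_ae_eq
      (Finset.measurable_sum _ fun j _ => Finset.measurable_sum _ fun A _ =>
        (measurable_one.indicator (hmeas j A)).mul_const _)
      ((ae_injective_of_measure_eq_zero hties).mono fun ω hinj =>
        indicator_sysLifeOn_eq_orderStat hinj hφ hk1 hkm),
      integral_sum_sum_indicator_mul hmeas]
    simp only [relQual_eq_measureReal]
  exact ⟨hsum.trans (sum_filter_powerset_sum_sdiff M _ _).symm, hsum⟩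

theorem stmt_0 {Ω : Type*} [MeasurableSpace Ω] (μ : Measure Ω) [IsProbabilityMeasure μ]
    {n : ℕ} (T : Fin n → Ω → ℝ) (hTmeas : ∀ i, Measurable (T i))
    (hTnonneg : ∀ i ω, 0 ≤ T i ω)
    (hties : ∀ i j : Fin n, i ≠ j → μ {ω | T i ω = T j ω} = 0)
    (φ : Finset (Fin n) → ℝ)
    (hφ01 : ∀ A, φ A = 0 ∨ φ A = 1)
    (hφmono : ∀ A B : Finset (Fin n), A ⊆ B → φ A ≤ φ B)
    (hφempty : φ ∅ = 0) (hφfull : φ Finset.univ = 1)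
    (M : Finset (Fin n)) (hM : M.Nonempty) (k : ℕ) (hk1 : 1 ≤ k) (hkm : k ≤ M.card) :
    (μ {ω | sysLifeOn T Finset.univ φ ω = orderStat T M k ω}).toReal =
      ∑ A ∈ (Finset.univ : Finset (Fin n)).powerset.filter (fun A => (M \ A).card = k),
        ∑ j ∈ M \ A, relQual μ T j A * (φ (insert j A) - φ A)
    ∧
    (μ {ω | sysLifeOn T Finset.univ φ ω = orderStat T M k ω}).toReal =
      ∑ j ∈ M, ∑ A ∈ ((Finset.univ : Finset (Fin n)) \ {j}).powerset.filter
          (fun A => (M \ A).card = k),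
        relQual μ T j A * (φ (insert j A) - φ A) :=
  stmt_0_general μ T hTmeas hties φ hφ01 hφmono hφempty hφfull M k hk1 hkm
end

section
/- For every nonempty set M ⊆ C, Pr(T_C = T_j for some j ∈ M) = ∑_{A⊆C} ∑_{j∈M∖A} q_j(A)·Δ_jφ(A). -/
open MeasureTheory Finset

/-! Off the null set of ties the system lifetime is the lifetime of a unique *critical*
component `j`: with `A` the set of components outliving `j`, `φ A = 0` and `φ (A ∪ {j}) = 1`.
For fixed `j` the events `{the components outliving j are exactly A}` (`j ∉ A`) partition the
sample space, have probabilities `q_j(A)`, and on each of them `Δ_jφ(A)` is the indicator that `j`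
is critical; summing over `j ∈ M` gives the formula. -/

section StructureFunction

variable {α : Type*} {φ : Finset α → ℝ} {A B : Finset α}

lemma nonempty_of_eq_one (hempty : φ ∅ = 0) (hA : φ A = 1) : A.Nonempty := by
  rw [nonempty_iff_ne_empty]
  rintro rfl
  norm_num [hempty] at hA

lemma eq_one_of_subset (h01 : ∀ A, φ A = 0 ∨ φ A = 1) (hmono : Monotone φ) (hAB : A ⊆ B)
    (hA : φ A = 1) : φ B = 1 :=
  (h01 B).resolve_left fun hB => by linarith [hmono hAB]

lemma sub_eq_ite_of_subset (h01 : ∀ A, φ A = 0 ∨ φ A = 1) (hmono : Monotone φ) (hAB : A ⊆ B) :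
    φ B - φ A = if φ A = 0 ∧ φ B = 1 then 1 else 0 := by
  have := hmono hAB
  rcases h01 A with hA | hA <;> rcases h01 B with hB | hB <;> simp [hA, hB]
  linarith

end StructureFunction

section Critical

variable {ι : Type*} [Fintype ι] {t : ι → ℝ} {φ : Finset ι → ℝ} {i j k : ι} {A : Finset ι}

noncomputable def outliving (t : ι → ℝ) (j : ι) : Finset ι := univ.filter fun i => t j < t i

@[simp]
lemma mem_outliving : i ∈ outliving t j ↔ t j < t i := by simp [outliving]

lemma notMem_outliving_self : j ∉ outliving t j := by simp

lemma outliving_eq_iff :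
    outliving t j = A ↔ (∀ i ∉ A, t i ≤ t j) ∧ ∀ i ∈ A, t j < t i := by
  constructor
  · rintro rfl
    exact ⟨fun i hi => not_lt.1 (mt mem_outliving.2 hi), fun i hi => mem_outliving.1 hi⟩
  · rintro ⟨hle, hlt⟩
    ext i
    exact ⟨fun hi => by_contra fun hiA => (mem_outliving.1 hi).not_ge (hle i hiA),
      fun hi => mem_outliving.2 (hlt i hi)⟩

variable [DecidableEq ι]

lemma subset_insert_outliving (ht : Function.Injective t) (hA : ∀ i ∈ A, t j ≤ t i) :
    A ⊆ insert j (outliving t j) := by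
  intro i hi
  rcases eq_or_ne i j with rfl | hij
  · exact mem_insert_self _ _
  · exact mem_insert_of_mem (mem_outliving.2 ((hA i hi).lt_of_ne (ht.ne hij).symm))

lemma insert_outliving_subset_outliving (h : t j < t k) :
    insert k (outliving t k) ⊆ outliving t j := by
  intro i hi
  rcases mem_insert.1 hi with rfl | hi
  · exact mem_outliving.2 h
  · exact mem_outliving.2 (h.trans (mem_outliving.1 hi))

def IsCritical (φ : Finset ι → ℝ) (t : ι → ℝ) (j : ι) : Prop :=
  φ (outliving t j) = 0 ∧ φ (insert j (outliving t j)) = 1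

lemma IsCritical.eq (hmono : Monotone φ) (ht : Function.Injective t) (hj : IsCritical φ t j)
    (hk : IsCritical φ t k) : j = k := by
  have key : ∀ {j k}, IsCritical φ t j → IsCritical φ t k → ¬ t j < t k := fun hj hk h => by
    have := hmono (insert_outliving_subset_outliving h)
    rw [hk.2, hj.1] at this
    norm_num at this
  exact ht (le_antisymm (not_lt.1 (key hk hj)) (not_lt.1 (key hj hk)))

lemma exists_isCritical (h01 : ∀ A, φ A = 0 ∨ φ A = 1) (hmono : Monotone φ)
    (hempty : φ ∅ = 0) (huniv : φ univ = 1) (ht : Function.Injective t) :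
    ∃ j, IsCritical φ t j := by
  set J := univ.filter fun j => φ (insert j (outliving t j)) = 1
  obtain ⟨j₀, -, hj₀⟩ := exists_min_image univ t (nonempty_of_eq_one hempty huniv)
  have hJ : J.Nonempty := ⟨j₀, mem_filter.2 ⟨mem_univ _,
    eq_one_of_subset h01 hmono (subset_insert_outliving ht fun i _ => hj₀ i (mem_univ i)) huniv⟩⟩
  -- the last component to fail while the system is still working is critical
  obtain ⟨j, hjJ, hjmax⟩ := exists_max_image J t hJ
  refine ⟨j, (h01 _).resolve_right fun hout => ?_, (mem_filter.1 hjJ).2⟩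
  obtain ⟨k, hk, hkmin⟩ := exists_min_image _ t (nonempty_of_eq_one hempty hout)
  have hkJ : k ∈ J := mem_filter.2 ⟨mem_univ _,
    eq_one_of_subset h01 hmono (subset_insert_outliving ht hkmin) hout⟩
  exact (hjmax k hkJ).not_gt (mem_outliving.1 hk)

end Critical

section Lifetime

variable {Ω : Type*} {n : ℕ} {T : Fin n → Ω → ℝ} {φ : Finset (Fin n) → ℝ} {ω : Ω} {j : Fin n}

lemma sysLifeOn_univ_eq_of_isCritical (hmono : Monotone φ) (hempty : φ ∅ = 0)
    (hj : IsCritical φ (T · ω) j) : sysLifeOn T univ φ ω = T j ω := by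
  have hmem : insert j (outliving (T · ω) j) ∈ univ.powerset.filter fun A => φ A = 1 :=
    mem_filter.2 ⟨mem_powerset.2 (subset_univ _), hj.2⟩
  rw [sysLifeOn, dif_pos ⟨_, hmem⟩]
  refine le_antisymm (sup'_le _ _ fun A hA => ?_) (le_sup'_of_le _ hmem ?_)
  · have hA1 : φ A = 1 := (mem_filter.1 hA).2
    rw [dif_pos (nonempty_of_eq_one hempty hA1)]
    by_contra! hlt
    have hsub : A ⊆ outliving (T · ω) j := fun i hi =>
      mem_outliving.2 (hlt.trans_le (inf'_le _ hi))
    have := hmono hsub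
    rw [hA1, hj.1] at this
    norm_num at this
  · rw [dif_pos (insert_nonempty _ _)]
    refine le_inf' _ _ fun i hi => ?_
    rcases mem_insert.1 hi with rfl | hi
    · exact le_rfl
    · exact (mem_outliving.1 hi).le

lemma sysLifeOn_univ_eq_iff_isCritical (h01 : ∀ A, φ A = 0 ∨ φ A = 1) (hmono : Monotone φ)
    (hempty : φ ∅ = 0) (huniv : φ univ = 1) (hT : Function.Injective (T · ω)) :
    sysLifeOn T univ φ ω = T j ω ↔ IsCritical φ (T · ω) j := by
  refine ⟨fun h => ?_, sysLifeOn_univ_eq_of_isCritical hmono hempty⟩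
  obtain ⟨k, hk⟩ := exists_isCritical h01 hmono hempty huniv hT
  rwa [hT (h.symm.trans (sysLifeOn_univ_eq_of_isCritical hmono hempty hk))]

lemma setOf_isCritical_eq_preimage :
    {ω | IsCritical φ (T · ω) j} = (fun ω => outliving (T · ω) j) ⁻¹'
      ↑(univ.powerset.filter fun A => φ A = 0 ∧ φ (insert j A) = 1) := by
  ext ω
  simp [IsCritical]

end Lifetime

section Probability

variable {Ω : Type*} [MeasurableSpace Ω] {μ : Measure Ω} {n : ℕ} {T : Fin n → Ω → ℝ}
  {φ : Finset (Fin n) → ℝ}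

lemma ae_injective_of_ties_null (hties : ∀ i j : Fin n, i ≠ j → μ {ω | T i ω = T j ω} = 0) :
    ∀ᵐ ω ∂μ, Function.Injective (T · ω) := by
  have hne : ∀ i j : Fin n, ∀ᵐ ω ∂μ, T i ω = T j ω → i = j := fun i j => by
    by_cases hij : i = j
    · exact Filter.Eventually.of_forall fun _ _ => hij
    · exact measure_eq_zero_iff_ae_notMem.1 (hties i j hij) |>.mono fun ω hω h => (hω h).elim
  filter_upwards [ae_all_iff.2 fun i => ae_all_iff.2 (hne i)] with ω hω i j using hω i j

lemma measurableSet_outliving_eq (hT : ∀ i, Measurable (T i)) (j : Fin n) (A : Finset (Fin n)) :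
    MeasurableSet {ω | outliving (T · ω) j = A} := by
  simp only [outliving_eq_iff, Set.ofPred_and, Set.ofPred_forall]
  exact (MeasurableSet.iInter fun i => .iInter fun _ => measurableSet_le (hT i) (hT j)).inter
    (MeasurableSet.iInter fun i => .iInter fun _ => measurableSet_lt (hT j) (hT i))

lemma relQual_eq_measure_outliving_eq (j : Fin n) (A : Finset (Fin n)) :
    relQual μ T j A = (μ {ω | outliving (T · ω) j = A}).toReal := by
  simp_rw [outliving_eq_iff]
  rfl

lemma relQual_of_mem {j : Fin n} {A : Finset (Fin n)} (hj : j ∈ A) : relQual μ T j A = 0 := by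
  have : {ω | outliving (T · ω) j = A} = ∅ :=
    Set.eq_empty_of_forall_notMem fun ω hω => notMem_outliving_self (hω ▸ hj)
  rw [relQual_eq_measure_outliving_eq, this, measure_empty, ENNReal.toReal_zero]

lemma measurableSet_isCritical (hT : ∀ i, Measurable (T i)) (j : Fin n) :
    MeasurableSet {ω | IsCritical φ (T · ω) j} := by
  rw [setOf_isCritical_eq_preimage, ← Finset.set_biUnion_preimage_singleton]
  exact Finset.measurableSet_biUnion _ fun A _ => measurableSet_outliving_eq hT j A

lemma measure_isCritical [IsFiniteMeasure μ] (hT : ∀ i, Measurable (T i))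
    (h01 : ∀ A, φ A = 0 ∨ φ A = 1) (hmono : Monotone φ) (j : Fin n) :
    (μ {ω | IsCritical φ (T · ω) j}).toReal =
      ∑ A ∈ univ.powerset, relQual μ T j A * (φ (insert j A) - φ A) := by
  rw [setOf_isCritical_eq_preimage,
    ← sum_measure_preimage_singleton _ fun A _ => measurableSet_outliving_eq hT j A,
    ENNReal.toReal_sum fun _ _ => measure_ne_top _ _, sum_filter]
  refine sum_congr rfl fun A _ => ?_
  rw [sub_eq_ite_of_subset h01 hmono (subset_insert j A), mul_ite, mul_one, mul_zero,
    relQual_eq_measure_outliving_eq]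
  rfl

lemma measure_exists_sysLifeOn_eq (hT : ∀ i, Measurable (T i))
    (hties : ∀ i j : Fin n, i ≠ j → μ {ω | T i ω = T j ω} = 0) (h01 : ∀ A, φ A = 0 ∨ φ A = 1)
    (hmono : Monotone φ) (hempty : φ ∅ = 0) (huniv : φ univ = 1) (M : Finset (Fin n)) :
    μ {ω | ∃ j ∈ M, sysLifeOn T univ φ ω = T j ω} = ∑ j ∈ M, μ {ω | IsCritical φ (T · ω) j} := by
  have hinj := ae_injective_of_ties_null hties
  calc μ {ω | ∃ j ∈ M, sysLifeOn T univ φ ω = T j ω}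
      = μ (⋃ j ∈ M, {ω | IsCritical φ (T · ω) j}) := by
        refine measure_congr (Filter.eventuallyEq_set.2 (hinj.mono fun ω hω => ?_))
        simp [sysLifeOn_univ_eq_iff_isCritical h01 hmono hempty huniv hω]
    _ = ∑ j ∈ M, μ {ω | IsCritical φ (T · ω) j} := by
        refine measure_biUnion_finset₀ (fun j _ k _ hjk => ?_)
          fun j _ => (measurableSet_isCritical hT j).nullMeasurableSet
        exact measure_eq_zero_iff_ae_notMem.2 (hinj.mono fun ω hω hjk' =>
          hjk (hjk'.1.eq hmono hω hjk'.2))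

end Probability

theorem stmt_2_general {Ω : Type*} [MeasurableSpace Ω] (μ : Measure Ω) [IsProbabilityMeasure μ]
    {n : ℕ} (T : Fin n → Ω → ℝ) (hTmeas : ∀ i, Measurable (T i))
    (hties : ∀ i j : Fin n, i ≠ j → μ {ω | T i ω = T j ω} = 0)
    (φ : Finset (Fin n) → ℝ)
    (hφ01 : ∀ A, φ A = 0 ∨ φ A = 1)
    (hφmono : ∀ A B : Finset (Fin n), A ⊆ B → φ A ≤ φ B)
    (hφempty : φ ∅ = 0) (hφfull : φ Finset.univ = 1)
    (M : Finset (Fin n)) :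
    (μ {ω | ∃ j ∈ M, sysLifeOn T Finset.univ φ ω = T j ω}).toReal =
      ∑ A ∈ (Finset.univ : Finset (Fin n)).powerset,
        ∑ j ∈ M \ A, relQual μ T j A * (φ (insert j A) - φ A) := by
  have hmono : Monotone φ := fun A B => hφmono A B
  rw [measure_exists_sysLifeOn_eq hTmeas hties hφ01 hmono hφempty hφfull,
    ENNReal.toReal_sum fun _ _ => measure_ne_top _ _]
  simp_rw [measure_isCritical hTmeas hφ01 hmono]
  rw [sum_comm]
  refine sum_congr rfl fun A _ => (sum_subset sdiff_subset fun j hjM hj => ?_).symm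
  rw [relQual_of_mem (by simpa [hjM] using hj), zero_mul]

theorem stmt_2 {Ω : Type*} [MeasurableSpace Ω] (μ : Measure Ω) [IsProbabilityMeasure μ]
    {n : ℕ} (T : Fin n → Ω → ℝ) (hTmeas : ∀ i, Measurable (T i))
    (hTnonneg : ∀ i ω, 0 ≤ T i ω)
    (hties : ∀ i j : Fin n, i ≠ j → μ {ω | T i ω = T j ω} = 0)
    (φ : Finset (Fin n) → ℝ)
    (hφ01 : ∀ A, φ A = 0 ∨ φ A = 1)
    (hφmono : ∀ A B : Finset (Fin n), A ⊆ B → φ A ≤ φ B)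
    (hφempty : φ ∅ = 0) (hφfull : φ Finset.univ = 1)
    (M : Finset (Fin n)) (hM : M.Nonempty) :
    (μ {ω | ∃ j ∈ M, sysLifeOn T Finset.univ φ ω = T j ω}).toReal =
      ∑ A ∈ (Finset.univ : Finset (Fin n)).powerset,
        ∑ j ∈ M \ A, relQual μ T j A * (φ (insert j A) - φ A) :=
  stmt_2_general μ T hTmeas hties φ hφ01 hφmono hφempty hφfull M
end

section
/- For every nonempty set M ⊆ C and every k ∈ {1,…,m}, p_M^{(k)} = ∑_{A⊆C, |M∩A|≤m−k+1} d(A)·Pr(T_{k:M} = min_{i∈A} T_i), and equivalently p_M^{(k)} = ∑_{A⊆C} d(A)·Pr(T_{k:M} = min_{i∈A} T_i). -/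
open MeasureTheory Finset

/-- `min_{i ∈ A} T i` (with junk value `0` when `A = ∅`). -/
noncomputable def minLifeOn {Ω : Type*} {n : ℕ} (T : Fin n → Ω → ℝ)
    (A : Finset (Fin n)) (ω : Ω) : ℝ :=
  if h : A.Nonempty then A.inf' h fun i => T i ω else 0

/-- The signed domination function `d(A) = ∑_{B ⊆ A} (-1)^{|A|-|B|} φ(B)`. -/
noncomputable def signedDom {n : ℕ} (φ : Finset (Fin n) → ℝ) (A : Finset (Fin n)) : ℝ :=
  ∑ B ∈ A.powerset, (-1 : ℝ) ^ (A.card - B.card) * φ B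

/-!
Let `W u = {i | u < T i}` be the set of components still working at time `u`. The system works
at time `u` iff `φ (W u) = 1`, and Möbius inversion gives `φ (W u) = ∑_{A ⊆ W u} d A`, i.e.
`1[u < T_C] = ∑_A d A · 1[u < min_A T]`. All these lifetimes are among the values `T i ω`, so
for any `s`, choosing `u < s` with no `T i ω` in `(u, s)` and subtracting the identities at `u`
and at `s` gives `1[T_C = s] = ∑_A d A · 1[min_A T = s]` pointwise. Integrating with
`s = T_{k:M}` gives the second formula. For the first, if `min_A T = T_{k:M}` and
`|M ∩ A| > m - k + 1`, then at least `k` lifetimes in `M` are `≤ T_{k:M}` while all those in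
`M ∩ A` are `≥ T_{k:M}`, so two components share a lifetime: a tie, of probability zero.
-/

theorem Finset.sum_Icc_neg_one_pow_card_sub {R α : Type*} [Ring R] [DecidableEq α]
    {C B : Finset α} (h : C ⊆ B) :
    ∑ A ∈ Icc C B, (-1 : R) ^ (#A - #C) = if C = B then 1 else 0 := by
  have hdisj : ∀ D ∈ (B \ C).powerset, Disjoint C D := fun D hD =>
    disjoint_sdiff.mono_right (mem_powerset.1 hD)
  rw [Icc_eq_image_powerset h, sum_image fun D hD E hE hDE => by
    rw [← union_sdiff_cancel_left (hdisj D hD), hDE, union_sdiff_cancel_left (hdisj E hE)]]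
  rw [sum_congr rfl fun D hD => by
    rw [card_union_of_disjoint (hdisj D hD), Nat.add_sub_cancel_left]]
  have := congrArg (Int.cast : ℤ → R) (sum_powerset_neg_one_pow_card (x := B \ C))
  push_cast at this
  rw [this]
  exact if_congr
    (sdiff_eq_empty_iff_subset.trans ⟨subset_antisymm h, fun h' => h' ▸ subset_rfl⟩) rfl rfl

theorem List.SortedLE.getElem_le_iff_lt_countP {α : Type*} [LinearOrder α] {l : List α}
    (hl : l.SortedLE) {j : ℕ} (hj : j < l.length) (c : α) :
    l[j] ≤ c ↔ j < l.countP (· ≤ c) := by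
  have hmono := List.sortedLE_iff_getElem_le_getElem_of_le.1 hl
  constructor
  · intro h
    have htake : (l.take (j + 1)).countP (· ≤ c) = j + 1 := by
      rw [List.countP_eq_length.2, List.length_take]
      · omega
      intro x hx
      obtain ⟨i, hi, rfl⟩ := List.mem_take_iff_getElem.1 hx
      simpa using (hmono (by omega)).trans h
    have := (List.take_sublist (j + 1) l).countP_le (p := (· ≤ c))
    omega
  · contrapose!
    intro h
    have hdrop : (l.drop j).countP (· ≤ c) = 0 := by
      rw [List.countP_eq_zero]
      intro x hx
      obtain ⟨i, hi, rfl⟩ := List.mem_drop_iff_getElem.1 hx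
      simpa using h.trans_le (hmono (by omega))
    have := (List.countP_le_length (p := (· ≤ c))).trans (List.length_take_le j l)
    rw [← List.take_append_drop j l, List.countP_append, hdrop]
    omega

theorem exists_lt_forall_le_or_le {α : Type*} [LinearOrder α] [NoMinOrder α] (t : Finset α)
    (s : α) :
    ∃ u < s, ∀ x ∈ t, x ≤ u ∨ s ≤ x := by
  obtain ⟨v, hv⟩ := exists_lt s
  refine ⟨(insert v {x ∈ t | x < s}).max' (insert_nonempty _ _), ?_, fun x hx => ?_⟩
  · simpa [max'_lt_iff] using hv
  · by_cases h : x < s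
    · exact .inl (le_max' _ _ (by simp [hx, h]))
    · exact .inr (not_lt.1 h)

theorem ite_eq_sub_ite_of_le_or_le {α : Type*} [LinearOrder α] {u s x : α} (hus : u < s)
    (hx : x ≤ u ∨ s ≤ x) :
    (if x = s then (1 : ℝ) else 0) = (if u < x then 1 else 0) - (if s < x then 1 else 0) := by
  split_ifs <;> norm_num <;> rcases hx with hx | hx <;> order

theorem measureReal_eq_sum_of_indicator_eq {Ω ι : Type*} [MeasurableSpace Ω] (μ : Measure Ω)
    [IsFiniteMeasure μ] {E : Set Ω} {F : ι → Set Ω} {s : Finset ι} {c : ι → ℝ}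
    (hE : MeasurableSet E) (hF : ∀ i ∈ s, MeasurableSet (F i))
    (h : ∀ ω, E.indicator 1 ω = ∑ i ∈ s, c i * (F i).indicator 1 ω) :
    μ.real E = ∑ i ∈ s, c i * μ.real (F i) := by
  rw [← integral_indicator_one hE, funext h,
    integral_finsetSum _ fun i hi => ((integrable_const 1).indicator (hF i hi)).const_mul _]
  exact sum_congr rfl fun i hi => by rw [integral_const_mul, integral_indicator_one (hF i hi)]

theorem signedDom_empty {n : ℕ} (φ : Finset (Fin n) → ℝ) : signedDom φ ∅ = φ ∅ := by
  simp [signedDom]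

theorem sum_powerset_signedDom {n : ℕ} (φ : Finset (Fin n) → ℝ) (B : Finset (Fin n)) :
    ∑ A ∈ B.powerset, signedDom φ A = φ B := by
  simp only [signedDom]
  rw [sum_comm' (t' := B.powerset) (s' := fun C => Icc C B) fun A C => by
    simp only [mem_powerset, mem_Icc]; grind]
  rw [sum_congr rfl fun C hC => by
    rw [← sum_mul, sum_Icc_neg_one_pow_card_sub (mem_powerset.1 hC), ite_mul, one_mul, zero_mul]]
  simp

structure IsSemicoherent_s5 {n : ℕ} (φ : Finset (Fin n) → ℝ) : Prop where
  eq_zero_or_eq_one : ∀ A, φ A = 0 ∨ φ A = 1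
  mono : ∀ A B : Finset (Fin n), A ⊆ B → φ A ≤ φ B
  map_empty : φ ∅ = 0
  map_univ : φ univ = 1

theorem IsSemicoherent_s5.nonempty_of_eq_one {n : ℕ} {φ : Finset (Fin n) → ℝ}
    (hφ : IsSemicoherent_s5 φ) {A : Finset (Fin n)} (hA : φ A = 1) : A.Nonempty :=
  nonempty_iff_ne_empty.2 fun h => by simp [h, hφ.map_empty] at hA

theorem IsSemicoherent_s5.nonempty_filter_eq_one {n : ℕ} {φ : Finset (Fin n) → ℝ}
    (hφ : IsSemicoherent_s5 φ) : {A ∈ (univ : Finset (Fin n)).powerset | φ A = 1}.Nonempty :=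
  ⟨univ, mem_filter.2 ⟨mem_powerset_self _, hφ.map_univ⟩⟩

section OrderStat

variable {Ω : Type*} {n : ℕ} (T : Fin n → Ω → ℝ) (M : Finset (Fin n)) {k : ℕ}

theorem orderStat_le_iff (hk1 : 1 ≤ k) (hkm : k ≤ #M) (ω : Ω) (c : ℝ) :
    orderStat T M k ω ≤ c ↔ k ≤ #{i ∈ M | T i ω ≤ c} := by
  rw [orderStat]
  set l := (M.val.map fun i => T i ω).sort (· ≤ ·)
  have hlen : l.length = #M := by simp [l]
  have hcount : l.countP (· ≤ c) = #{i ∈ M | T i ω ≤ c} := by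
    rw [← Multiset.coe_countP, Multiset.sort_eq, Multiset.countP_map, card_def, filter_val]
  rw [List.getD_eq_getElem _ _ (by omega),
    (Multiset.pairwise_sort _ _).sortedLE.getElem_le_iff_lt_countP, hcount]
  omega

theorem measurable_orderStat [MeasurableSpace Ω] (hT : ∀ i, Measurable (T i))
    (hk1 : 1 ≤ k) (hkm : k ≤ #M) : Measurable (orderStat T M k) := by
  refine measurable_of_Iic fun c => ?_
  have hcard : Measurable fun ω => #{i ∈ M | T i ω ≤ c} := by
    simp_rw [card_filter]
    exact Finset.measurable_sum _ fun i _ =>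
      Measurable.ite (measurableSet_le (hT i) measurable_const) measurable_const measurable_const
  have hpre : orderStat T M k ⁻¹' Set.Iic c =
      (fun ω => #{i ∈ M | T i ω ≤ c}) ⁻¹' Set.Ici k :=
    Set.ext fun ω => orderStat_le_iff T M hk1 hkm ω c
  exact hpre ▸ hcard measurableSet_Ici

end OrderStat

section Lifetimes

variable {Ω : Type*} {n : ℕ} (T : Fin n → Ω → ℝ)

theorem minLifeOn_le_of_mem {A : Finset (Fin n)} {i : Fin n} (hi : i ∈ A) (ω : Ω) :
    minLifeOn T A ω ≤ T i ω := by
  rw [minLifeOn, dif_pos ⟨i, hi⟩]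
  exact inf'_le _ hi

theorem exists_minLifeOn_eq {A : Finset (Fin n)} (hA : A.Nonempty) (ω : Ω) :
    ∃ i ∈ A, minLifeOn T A ω = T i ω := by
  rw [minLifeOn, dif_pos hA]
  exact exists_mem_eq_inf' hA _

theorem lt_minLifeOn_iff {A : Finset (Fin n)} (hA : A.Nonempty) (ω : Ω) (u : ℝ) :
    u < minLifeOn T A ω ↔ A ⊆ ({i | u < T i ω} : Finset (Fin n)) := by
  rw [minLifeOn, dif_pos hA, lt_inf'_iff]
  simp [subset_iff]

theorem measurable_minLifeOn [MeasurableSpace Ω] (hT : ∀ i, Measurable (T i))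
    (A : Finset (Fin n)) : Measurable (minLifeOn T A) := by
  by_cases hA : A.Nonempty
  · rw [show minLifeOn T A = A.inf' hA T from funext fun ω => by
      rw [minLifeOn, dif_pos hA, Finset.inf'_apply]]
    exact inf'_induction hA _ (fun _ hf _ hg => hf.inf hg) fun i _ => hT i
  · rw [show minLifeOn T A = fun _ => 0 from funext fun ω => dif_neg hA]
    exact measurable_const

theorem measurable_sysLifeOn [MeasurableSpace Ω] (hT : ∀ i, Measurable (T i))
    (D : Finset (Fin n)) (χ : Finset (Fin n) → ℝ) : Measurable (sysLifeOn T D χ) := by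
  by_cases hD : {A ∈ D.powerset | χ A = 1}.Nonempty
  · rw [show sysLifeOn T D χ = {A ∈ D.powerset | χ A = 1}.sup' hD (minLifeOn T) from
      funext fun ω => by rw [sysLifeOn, dif_pos hD, Finset.sup'_apply]; rfl]
    exact Finset.measurable_sup' hD fun A _ => measurable_minLifeOn T hT A
  · rw [show sysLifeOn T D χ = fun _ => 0 from funext fun ω => dif_neg hD]
    exact measurable_const

variable {φ : Finset (Fin n) → ℝ}

theorem sysLifeOn_univ_eq (hφ : IsSemicoherent_s5 φ) (ω : Ω) :
    sysLifeOn T univ φ ω =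
      {A ∈ (univ : Finset (Fin n)).powerset | φ A = 1}.sup' hφ.nonempty_filter_eq_one
        (minLifeOn T · ω) := by
  rw [sysLifeOn, dif_pos]
  rfl

theorem exists_sysLifeOn_eq (hφ : IsSemicoherent_s5 φ) (ω : Ω) :
    ∃ i, sysLifeOn T univ φ ω = T i ω := by
  rw [sysLifeOn_univ_eq T hφ]
  obtain ⟨A, hA, hsup⟩ := exists_mem_eq_sup' _ (minLifeOn T · ω)
  obtain ⟨i, -, hi⟩ := exists_minLifeOn_eq T (hφ.nonempty_of_eq_one (mem_filter.1 hA).2) ω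
  exact ⟨i, hsup.trans hi⟩

theorem lt_sysLifeOn_iff (hφ : IsSemicoherent_s5 φ) (ω : Ω) (u : ℝ) :
    u < sysLifeOn T univ φ ω ↔ φ {i | u < T i ω} = 1 := by
  rw [sysLifeOn_univ_eq T hφ, lt_sup'_iff]
  constructor
  · rintro ⟨A, hA, hu⟩
    have hAφ : φ A = 1 := (mem_filter.1 hA).2
    have hle := hφ.mono A _ ((lt_minLifeOn_iff T (hφ.nonempty_of_eq_one hAφ) ω u).1 hu)
    rcases hφ.eq_zero_or_eq_one {i | u < T i ω} with h | h
    · linarith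
    · exact h
  · intro h
    refine ⟨({i | u < T i ω} : Finset (Fin n)),
      mem_filter.2 ⟨mem_powerset.2 (subset_univ _), h⟩, ?_⟩
    exact (lt_minLifeOn_iff T (hφ.nonempty_of_eq_one h) ω u).2 subset_rfl

theorem indicator_lt_sysLifeOn_eq_sum (hφ : IsSemicoherent_s5 φ) (ω : Ω) (u : ℝ) :
    (if u < sysLifeOn T univ φ ω then (1 : ℝ) else 0) =
      ∑ A ∈ univ.powerset, signedDom φ A * if u < minLifeOn T A ω then 1 else 0 := by
  set W : Finset (Fin n) := {i | u < T i ω}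
  have hsys : (if u < sysLifeOn T univ φ ω then (1 : ℝ) else 0) = φ W := by
    rcases hφ.eq_zero_or_eq_one W with h | h <;> simp [lt_sysLifeOn_iff T hφ, W, h]
  have hterm : ∀ A, signedDom φ A * (if u < minLifeOn T A ω then 1 else 0) =
      if A ⊆ W then signedDom φ A else 0 := fun A => by
    rcases A.eq_empty_or_nonempty with rfl | hA
    · simp [signedDom_empty, hφ.map_empty]
    · simp [lt_minLifeOn_iff T hA ω u, W]
  rw [hsys, ← sum_powerset_signedDom φ W, sum_congr rfl fun A _ => hterm A, ← sum_filter]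
  congr 1
  ext A
  simp

theorem indicator_sysLifeOn_eq_sum (hφ : IsSemicoherent_s5 φ) (ω : Ω) (s : ℝ) :
    (if sysLifeOn T univ φ ω = s then (1 : ℝ) else 0) =
      ∑ A ∈ univ.powerset, signedDom φ A * if s = minLifeOn T A ω then 1 else 0 := by
  simp_rw [@eq_comm _ s]
  obtain ⟨u, hus, hgap⟩ := exists_lt_forall_le_or_le (univ.image (T · ω)) s
  have hsplit : ∀ i x, x = T i ω →
      (if x = s then (1 : ℝ) else 0) = (if u < x then 1 else 0) - (if s < x then 1 else 0) := by
    rintro i x rfl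
    exact ite_eq_sub_ite_of_le_or_le hus (hgap _ (mem_image_of_mem _ (mem_univ i)))
  obtain ⟨i, hi⟩ := exists_sysLifeOn_eq T hφ ω
  rw [hsplit i _ hi, indicator_lt_sysLifeOn_eq_sum T hφ, indicator_lt_sysLifeOn_eq_sum T hφ,
    ← sum_sub_distrib]
  refine sum_congr rfl fun A _ => ?_
  rcases A.eq_empty_or_nonempty with rfl | hA
  · simp [signedDom_empty, hφ.map_empty]
  · obtain ⟨j, -, hj⟩ := exists_minLifeOn_eq T hA ω
    rw [hsplit j _ hj, mul_sub]

theorem measureReal_sysLifeOn_eq_sum [MeasurableSpace Ω] (μ : Measure Ω) [IsFiniteMeasure μ]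
    (hT : ∀ i, Measurable (T i)) (hφ : IsSemicoherent_s5 φ) {S : Ω → ℝ} (hS : Measurable S) :
    μ.real {ω | sysLifeOn T univ φ ω = S ω} =
      ∑ A ∈ univ.powerset, signedDom φ A * μ.real {ω | S ω = minLifeOn T A ω} := by
  refine measureReal_eq_sum_of_indicator_eq μ
    (measurableSet_eq_fun (measurable_sysLifeOn T hT _ _) hS)
    (fun A _ => measurableSet_eq_fun hS (measurable_minLifeOn T hT A)) fun ω => ?_
  simpa [Set.indicator_apply] using indicator_sysLifeOn_eq_sum T hφ ω (S ω)

end Lifetimes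

section Ties

variable {Ω : Type*} {n : ℕ} (T : Fin n → Ω → ℝ) (M : Finset (Fin n)) {k : ℕ}

theorem exists_ne_eq_of_orderStat_eq_minLifeOn (hk1 : 1 ≤ k) (hkm : k ≤ #M)
    {A : Finset (Fin n)} (hA : #M - k + 1 < #(M ∩ A)) {ω : Ω}
    (h : orderStat T M k ω = minLifeOn T A ω) : ∃ i j, i ≠ j ∧ T i ω = T j ω := by
  set s := orderStat T M k ω
  set B : Finset (Fin n) := {i ∈ M | T i ω ≤ s}
  have hB : k ≤ #B := (orderStat_le_iff T M hk1 hkm ω s).1 le_rfl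
  have htwo : 1 < #(M ∩ A ∩ B) := by
    have := card_union_add_card_inter (M ∩ A) B
    have := card_le_card (union_subset inter_subset_left (filter_subset _ M) : M ∩ A ∪ B ⊆ M)
    omega
  have heq : ∀ i ∈ M ∩ A ∩ B, T i ω = s := fun i hi => by
    simp only [mem_inter, B, mem_filter] at hi
    exact le_antisymm hi.2.2 (h ▸ minLifeOn_le_of_mem T hi.1.2 ω)
  obtain ⟨i, hi, j, hj, hij⟩ := one_lt_card.1 htwo
  exact ⟨i, j, hij, (heq i hi).trans (heq j hj).symm⟩

theorem measure_orderStat_eq_minLifeOn_eq_zero [MeasurableSpace Ω] {μ : Measure Ω}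
    (hties : ∀ i j : Fin n, i ≠ j → μ {ω | T i ω = T j ω} = 0) (hk1 : 1 ≤ k)
    (hkm : k ≤ #M) {A : Finset (Fin n)} (hA : #M - k + 1 < #(M ∩ A)) :
    μ {ω | orderStat T M k ω = minLifeOn T A ω} = 0 := by
  have hnull : μ (⋃ (i) (j) (_ : i ≠ j), {ω | T i ω = T j ω}) = 0 :=
    measure_iUnion_null fun i => measure_iUnion_null fun j => measure_iUnion_null (hties i j)
  refine measure_mono_null (fun ω hω => ?_) hnull
  obtain ⟨i, j, hij, h⟩ := exists_ne_eq_of_orderStat_eq_minLifeOn T M hk1 hkm hA hω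
  simp only [Set.mem_iUnion]
  exact ⟨i, j, hij, h⟩

end Ties

theorem stmt_5_general {Ω : Type*} [MeasurableSpace Ω] (μ : Measure Ω) [IsProbabilityMeasure μ]
    {n : ℕ} (T : Fin n → Ω → ℝ) (hTmeas : ∀ i, Measurable (T i))
    (hties : ∀ i j : Fin n, i ≠ j → μ {ω | T i ω = T j ω} = 0)
    (φ : Finset (Fin n) → ℝ)
    (hφ01 : ∀ A, φ A = 0 ∨ φ A = 1)
    (hφmono : ∀ A B : Finset (Fin n), A ⊆ B → φ A ≤ φ B)
    (hφempty : φ ∅ = 0) (hφfull : φ Finset.univ = 1)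
    (M : Finset (Fin n)) (k : ℕ) (hk1 : 1 ≤ k) (hkm : k ≤ M.card) :
    (μ {ω | sysLifeOn T Finset.univ φ ω = orderStat T M k ω}).toReal =
      ∑ A ∈ (Finset.univ : Finset (Fin n)).powerset.filter
          (fun A => (M ∩ A).card ≤ M.card - k + 1),
        signedDom φ A * (μ {ω | orderStat T M k ω = minLifeOn T A ω}).toReal
    ∧
    (μ {ω | sysLifeOn T Finset.univ φ ω = orderStat T M k ω}).toReal =
      ∑ A ∈ (Finset.univ : Finset (Fin n)).powerset,
        signedDom φ A * (μ {ω | orderStat T M k ω = minLifeOn T A ω}).toReal := by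
  have hall := measureReal_sysLifeOn_eq_sum T μ hTmeas ⟨hφ01, hφmono, hφempty, hφfull⟩
    (measurable_orderStat T M hTmeas hk1 hkm)
  simp only [measureReal_def] at hall
  refine ⟨hall.trans (sum_subset (filter_subset _ _) fun A hA hA' => ?_).symm, hall⟩
  rw [measure_orderStat_eq_minLifeOn_eq_zero T M hties hk1 hkm
    (not_le.1 fun h => hA' (mem_filter.2 ⟨hA, h⟩)), ENNReal.toReal_zero, mul_zero]

theorem stmt_5 {Ω : Type*} [MeasurableSpace Ω] (μ : Measure Ω) [IsProbabilityMeasure μ]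
    {n : ℕ} (T : Fin n → Ω → ℝ) (hTmeas : ∀ i, Measurable (T i))
    (hTnonneg : ∀ i ω, 0 ≤ T i ω)
    (hties : ∀ i j : Fin n, i ≠ j → μ {ω | T i ω = T j ω} = 0)
    (φ : Finset (Fin n) → ℝ)
    (hφ01 : ∀ A, φ A = 0 ∨ φ A = 1)
    (hφmono : ∀ A B : Finset (Fin n), A ⊆ B → φ A ≤ φ B)
    (hφempty : φ ∅ = 0) (hφfull : φ Finset.univ = 1)
    (M : Finset (Fin n)) (hM : M.Nonempty) (k : ℕ) (hk1 : 1 ≤ k) (hkm : k ≤ M.card) :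
    (μ {ω | sysLifeOn T Finset.univ φ ω = orderStat T M k ω}).toReal =
      ∑ A ∈ (Finset.univ : Finset (Fin n)).powerset.filter
          (fun A => (M ∩ A).card ≤ M.card - k + 1),
        signedDom φ A * (μ {ω | orderStat T M k ω = minLifeOn T A ω}).toReal
    ∧
    (μ {ω | sysLifeOn T Finset.univ φ ω = orderStat T M k ω}).toReal =
      ∑ A ∈ (Finset.univ : Finset (Fin n)).powerset,
        signedDom φ A * (μ {ω | orderStat T M k ω = minLifeOn T A ω}).toReal :=
  stmt_5_general μ T hTmeas hties φ hφ01 hφmono hφempty hφfull M k hk1 hkm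
end
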